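/- arXiv:1301.1239 — 6 statements merged into one kernel-verified Lean document; each statement's English description precedes it below -/
import Mathlib

section
/- Let V be a linear subspace of 𝔽_q^n of codimension k, and let X ∈ 𝔽_q^n be a random vector with independent identically distributed entries, each of whose distribution satisfies sup_{t ∈ 𝔽_q} P(ξ = t) ≤ 1 − α for some 0 < α < 1. Then P(X ∈ V) ≤ (1 − α)^k. -/
/-!
A maximal linearly independent subfamily of the coordinate functionals restricted to `V` has
at most `dim V` members and spans all of them, so the coordinates in its index set `S` already
determine a vector of `V`. Summing `∏_{i ∈ S} μ (x i)` over `x ∈ V` therefore counts each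
pattern on `S` at most once and gives at most `1`, while each of the at least `k` coordinates
outside `S` contributes a factor at most `1 - α`.
-/

open Finset Module

theorem Submodule.exists_finset_card_le_finrank_injOn_restrict {K ι : Type*} [Field K]
    [Fintype ι] (V : Submodule K (ι → K)) :
    ∃ S : Finset ι, #S ≤ finrank K V ∧ Set.InjOn (fun (x : ι → K) (i : S) => x i) V := by
  classical
  let coord : ι → Dual K V := fun i => (LinearMap.proj i).comp V.subtype
  obtain ⟨b, -, -, hspan, hind⟩ :=
    exists_linearIndepOn_extension (linearIndepOn_empty K coord) (Set.empty_subset Set.univ)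
  refine ⟨b.toFinset, ?_, fun x hx y hy hxy => ?_⟩
  · rw [Set.toFinset_card, ← Subspace.dual_finrank_eq]
    exact hind.fintype_card_le_finrank
  · let w : V := ⟨x - y, V.sub_mem hx hy⟩
    have hb : coord '' b ⊆ LinearMap.ker (Dual.eval K V w) := by
      rintro _ ⟨i, hi, rfl⟩
      have hxy_i := congrFun hxy ⟨i, by simpa using hi⟩
      simp [coord, w, hxy_i]
    funext j
    have hj := Submodule.span_le.mpr hb (hspan ⟨j, Set.mem_univ j, rfl⟩)
    simpa [coord, w, sub_eq_zero] using hj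

theorem Finset.sum_prod_le_one_of_injOn_restrict {ι α : Type*} [Fintype α] {S : Finset ι}
    {A : Finset (ι → α)} (hA : Set.InjOn (fun (x : ι → α) (i : S) => x i) A) {μ : α → ℝ}
    (hμ0 : ∀ t, 0 ≤ μ t) (hμ1 : ∑ t, μ t = 1) :
    ∑ x ∈ A, ∏ i ∈ S, μ (x i) ≤ 1 := by
  classical
  calc ∑ x ∈ A, ∏ i ∈ S, μ (x i)
      = ∑ y ∈ A.image (fun (x : ι → α) (i : S) => x i), ∏ i, μ (y i) := by
        rw [sum_image hA]
        exact sum_congr rfl fun x _ => (prod_coe_sort S _).symm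
    _ ≤ ∑ y : S → α, ∏ i, μ (y i) :=
        sum_le_univ_sum_of_nonneg fun y => prod_nonneg fun i _ => hμ0 _
    _ = 1 := by rw [← Fintype.prod_sum, hμ1, prod_const_one]

theorem Submodule.sum_indicator_mul_prod_le_pow {ι F : Type*} [Fintype ι] [DecidableEq ι]
    [Field F] [Fintype F] (V : Submodule F (ι → F)) {μ : F → ℝ} {p : ℝ}
    (hμ0 : ∀ t, 0 ≤ μ t) (hμ1 : ∑ t, μ t = 1) (hμp : ∀ t, μ t ≤ p) (hp1 : p ≤ 1) :
    ∑ x : ι → F, Set.indicator (V : Set (ι → F)) (fun _ => (1 : ℝ)) x * ∏ i, μ (x i)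
      ≤ p ^ (Fintype.card ι - finrank F V) := by
  classical
  obtain ⟨S, hS, hinj⟩ := V.exists_finset_card_le_finrank_injOn_restrict
  have hp0 : 0 ≤ p := (hμ0 0).trans (hμp 0)
  have hcompl : ∀ x : ι → F, ∏ i ∈ Sᶜ, μ (x i) ≤ p ^ (Fintype.card ι - finrank F V) :=
    fun x => calc ∏ i ∈ Sᶜ, μ (x i)
        ≤ p ^ #Sᶜ := (prod_le_prod (fun i _ => hμ0 _) fun i _ => hμp _).trans_eq (prod_const p)
      _ ≤ p ^ (Fintype.card ι - finrank F V) :=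
        pow_le_pow_of_le_one hp0 hp1 (by rw [card_compl]; omega)
  let VF := univ.filter (· ∈ V)
  have hVF : Set.InjOn (fun (x : ι → F) (i : S) => x i) VF :=
    hinj.mono fun x hx => (mem_filter.mp hx).2
  calc ∑ x : ι → F, Set.indicator (V : Set (ι → F)) (fun _ => (1 : ℝ)) x * ∏ i, μ (x i)
      = ∑ x ∈ VF, (∏ i ∈ S, μ (x i)) * ∏ i ∈ Sᶜ, μ (x i) := by
        simp only [Set.indicator_apply, ite_mul, one_mul, zero_mul, SetLike.mem_coe,
          prod_mul_prod_compl]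
        rw [sum_ite, sum_const_zero, add_zero]
    _ ≤ ∑ x ∈ VF, (∏ i ∈ S, μ (x i)) * p ^ (Fintype.card ι - finrank F V) :=
        sum_le_sum fun x _ =>
          mul_le_mul_of_nonneg_left (hcompl x) (prod_nonneg fun i _ => hμ0 _)
    _ ≤ p ^ (Fintype.card ι - finrank F V) := by
        rw [← sum_mul]
        exact mul_le_of_le_one_left (pow_nonneg hp0 _)
          (sum_prod_le_one_of_injOn_restrict hVF hμ0 hμ1)

theorem stmt_0_general {F : Type*} [Field F] [Fintype F]
    (n k : ℕ) (V : Submodule F (Fin n → F))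
    (hV : Module.finrank F V = n - k) (hkn : k ≤ n)
    (α : ℝ) (hα0 : 0 < α)
    (μ : F → ℝ) (hμ0 : ∀ t, 0 ≤ μ t) (hμ1 : ∑ t, μ t = 1)
    (hent : ∀ t, μ t ≤ 1 - α) :
    ∑ x : Fin n → F, Set.indicator (V : Set (Fin n → F)) (fun _ => (1 : ℝ)) x
        * ∏ i, μ (x i) ≤ (1 - α) ^ k := by
  have hcodim : Fintype.card (Fin n) - finrank F V = k := by
    rw [Fintype.card_fin, hV]; omega
  simpa only [hcodim] using V.sum_indicator_mul_prod_le_pow hμ0 hμ1 hent (by linarith)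

/-- **Odlyzko's lemma.** If `V` is a subspace of `𝔽_q^n` of codimension `k` and `X` is a
random vector with iid entries of min-entropy `α`, then `P(X ∈ V) ≤ (1 - α)^k`. -/
theorem stmt_0 {F : Type*} [Field F] [Fintype F] [DecidableEq F]
    (n k : ℕ) (V : Submodule F (Fin n → F))
    (hV : Module.finrank F V = n - k) (hkn : k ≤ n)
    (α : ℝ) (hα0 : 0 < α) (hα1 : α < 1)
    (μ : F → ℝ) (hμ0 : ∀ t, 0 ≤ μ t) (hμ1 : ∑ t, μ t = 1)
    (hent : ∀ t, μ t ≤ 1 - α) :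
    ∑ x : Fin n → F, Set.indicator (V : Set (Fin n → F)) (fun _ => (1 : ℝ)) x
        * ∏ i, μ (x i) ≤ (1 - α) ^ k :=
  stmt_0_general n k V hV hkn α hα0 μ hμ0 hμ1 hent
end

section
/- Let A₁, ..., A_k and B be nonempty subsets of a finite abelian group Z with A₁ + ⋯ + A_k ⊆ B, and suppose B contains no coset of a non-trivial subgroup of Z. Then |B| + (k−1) ≥ |A₁| + ⋯ + |A_k|. -/
/-!
Iterating over the summands reduces the theorem to two sets: if `s + t` contains no coset of a
nontrivial subgroup then `|s| + |t| ≤ |s + t| + 1`. This is proved by induction on `|t|` via the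
Dyson e-transform `(s, t) ↦ (s ∪ (e + t), t ∩ (s - e))`, which keeps `|s| + |t|` and does not
enlarge the sumset. When `|t| ≥ 2`, with `d = c₁ - c₂` for distinct `c₁, c₂ ∈ t`, some `x ∈ s` has
`x + d ∉ s`, for otherwise `d` would stabilise `s + t`; the choice `e = x - c₂` then keeps `c₂` and
drops `c₁` from `t`.
-/

open scoped Pointwise

open Finset

section

variable {Z : Type*} [AddCommGroup Z]

def CosetFree (B : Finset Z) : Prop :=
  ∀ H : AddSubgroup Z, H ≠ ⊥ → ∀ s : Z, ¬ ∀ h ∈ H, h + s ∈ B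

namespace CosetFree

variable {s t B : Finset Z}

lemma mono (hB : CosetFree B) (hsB : s ⊆ B) : CosetFree s :=
  fun H hH x hx ↦ hB H hH x fun h hh ↦ hsB (hx h hh)

variable [DecidableEq Z]

lemma of_add_left (h : CosetFree (s + t)) (ht : t.Nonempty) : CosetFree s := by
  obtain ⟨a, ha⟩ := ht
  refine fun H hH x hx ↦ h H hH (x + a) fun g hg ↦ ?_
  rw [← add_assoc]
  exact add_mem_add (hx g hg) ha

lemma stabilizer_eq_bot (h : CosetFree s) (hs : s.Nonempty) : AddAction.stabilizer Z s = ⊥ := by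
  by_contra hH
  obtain ⟨x, hx⟩ := hs
  exact h _ hH x fun g hg ↦ AddAction.mem_stabilizer_finset'.mp hg hx

lemma exists_add_notMem (h : CosetFree (s + t)) (hs : s.Nonempty) (ht : t.Nonempty) {d : Z}
    (hd : d ≠ 0) : ∃ x ∈ s, x + d ∉ s := by
  by_contra! hper
  have hds : d +ᵥ s = s := AddAction.mem_stabilizer_iff.mp <|
    AddAction.mem_stabilizer_finset'.mpr fun x hx ↦ by rw [vadd_eq_add, add_comm]; exact hper x hx
  apply hd
  rw [← AddSubgroup.mem_bot, ← h.stabilizer_eq_bot (hs.add ht), AddAction.mem_stabilizer_iff,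
    ← vadd_add_assoc, hds]

lemma card_add_card_le (h : CosetFree (s + t)) (hs : s.Nonempty) (ht : t.Nonempty) :
    #s + #t ≤ #(s + t) + 1 := by
  induction t using Finset.strongInduction generalizing s with
  | H t IH =>
  obtain ⟨c₂, hc₂⟩ := ht
  obtain rfl | htn := eq_singleton_or_nontrivial hc₂
  · simp [add_singleton]
  obtain ⟨c₁, hc₁, hne⟩ := htn.exists_ne c₂
  obtain ⟨x, hx, hxd⟩ := h.exists_add_notMem hs ⟨c₂, hc₂⟩ (sub_ne_zero.mpr hne)
  set e := x - c₂ with he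
  have hc₂' : c₂ ∈ t ∩ (-e +ᵥ s) := by
    refine mem_inter.mpr ⟨hc₂, mem_vadd_finset.mpr ⟨x, hx, ?_⟩⟩
    simp [e]
  have hc₁' : c₁ ∉ t ∩ (-e +ᵥ s) := by
    have : e + c₁ = x + (c₁ - c₂) := by rw [he]; abel
    rw [mem_inter, mem_neg_vadd_finset_iff, vadd_eq_add, this]
    exact fun h ↦ hxd h.2
  have hsub := addDysonETransform.subset e (s, t)
  have hcard := addDysonETransform.card e (s, t)
  have hIH := IH _ (ssubset_of_subset_not_superset inter_subset_left fun h ↦ hc₁' (h hc₁))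
    (h.mono hsub) (hs.mono subset_union_left) ⟨c₂, hc₂'⟩
  have hsumset := card_le_card hsub
  simp only [addDysonETransform_fst, addDysonETransform_snd] at hcard hIH hsumset
  omega

lemma sum_card_add_one_le {k : ℕ} {A : Fin k → Finset Z} (h : CosetFree (∑ i, A i))
    (hA : ∀ i, (A i).Nonempty) : ∑ i, #(A i) + 1 ≤ #(∑ i, A i) + k := by
  induction k with
  | zero => simp
  | succ k IH =>
  rw [Fin.sum_univ_castSucc] at h ⊢
  rw [Fin.sum_univ_castSucc]
  have hS : (∑ i : Fin k, A i.castSucc).Nonempty :=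
    sum_induction _ Finset.Nonempty (fun _ _ ↦ .add) zero_nonempty fun i _ ↦ hA _
  have := IH (h.of_add_left (hA _)) fun i ↦ hA _
  have := h.card_add_card_le hS (hA (Fin.last k))
  omega

end CosetFree

end

theorem stmt_3_general {Z : Type*} [AddCommGroup Z] [DecidableEq Z]
    (k : ℕ) (A : Fin k → Finset Z) (B : Finset Z)
    (hA : ∀ i, (A i).Nonempty)
    (hsub : (∑ i, A i) ⊆ B)
    (hcoset : ∀ (H : AddSubgroup Z), H ≠ ⊥ → ∀ s : Z,
      ¬ (∀ h ∈ H, h + s ∈ B)) :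
    (∑ i, (A i).card) ≤ B.card + (k - 1) := by
  have := CosetFree.sum_card_add_one_le (CosetFree.mono hcoset hsub) hA
  have := card_le_card hsub
  omega

/-- **Iterated Kneser inequality.** If `A₁ + ⋯ + A_k ⊆ B` in a finite abelian group and
`B` contains no coset of a nontrivial subgroup, then `|B| + (k-1) ≥ |A₁| + ⋯ + |A_k|`. -/
theorem stmt_3 {Z : Type*} [AddCommGroup Z] [Fintype Z] [DecidableEq Z]
    (k : ℕ) (hk : 1 ≤ k) (A : Fin k → Finset Z) (B : Finset Z)
    (hA : ∀ i, (A i).Nonempty) (hB : B.Nonempty)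
    (hsub : (∑ i, A i) ⊆ B)
    (hcoset : ∀ (H : AddSubgroup Z), H ≠ ⊥ → ∀ s : Z,
      ¬ (∀ h ∈ H, h + s ∈ B)) :
    (∑ i, (A i).card) ≤ B.card + (k - 1) :=
  stmt_3_general k A B hA hsub hcoset
end

section
/- Let λ be a Young diagram with row lengths r_1 ≥ r_2 ≥ ⋯ and column lengths c_1, c_2, ⋯, and suppose the weight w(λ) = Σ_{(i,j) ∈ λ} j(j+1)/2 satisfies w(λ) < εn. Then the number d_λ(n) of semi-standard Young tableaux of shape λ with entries in {1, ..., n} satisfies d_λ(n) ≤ exp(C √ε · n) for an absolute constant C and all sufficiently large n. -/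
/-!
A weakly increasing row of length `r` with letters from `[n]` is determined by its multiset of
entries, so a tableau of shape `λ` is determined by one such multiset per row and
`d_λ(n) ≤ ∏ᵢ multichoose n rᵢ`. Comparing with one term of `(x + (1 - x)) ^ (n + r - 1)` gives
`multichoose n r ≤ x⁻ʳ (1 - x)⁻ⁿ` for `0 < x < 1`; take `x = e^{-t(i+1)}` in row `i`. The factors
`x⁻ʳ` multiply to `e^{t w(λ)}`, since `w(λ) = Σᵢ (i + 1) rᵢ` (count the weight by rows instead of
columns). Expanding `-log (1 - y) = Σₖ yᵏ / k` and summing the geometric series over the rows first,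
`Σᵢ -log (1 - e^{-t(i+1)}) ≤ Σₖ 1 / (t k²) = π² / (6t)`. Hence
`log d_λ(n) ≤ t w(λ) + π² n / (6t)`, and `t = ε^{-1/2}` gives the theorem with `C = 1 + π²/6`.
-/

/-- The number of semistandard Young tableaux of shape `μ` with entries among `n`
letters (entries in `{0, …, n-1}`). -/
noncomputable def ssytCount (μ : YoungDiagram) (n : ℕ) : ℕ :=
  Nat.card {T : SemistandardYoungTableau μ // ∀ c ∈ μ.cells, T.entry c.1 c.2 < n}

/-- The weight `w(λ) = Σ_j c_j(c_j+1)/2` of a Young diagram, i.e. the sum of the entries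
of the minimal semistandard tableau on `λ`. -/
def diagramWeight (μ : YoungDiagram) : ℕ :=
  ∑ j ∈ Finset.range (μ.rowLen 0), μ.colLen j * (μ.colLen j + 1) / 2

open Finset Real

theorem Monotone.eq_of_map_univ_val_eq {α : Type*} [LinearOrder α] {r : ℕ} {f g : Fin r → α}
    (hf : Monotone f) (hg : Monotone g) (h : univ.val.map f = univ.val.map g) : f = g := by
  rw [Fin.univ_val_map, Fin.univ_val_map, Multiset.coe_eq_coe] at h
  exact List.ofFn_injective (h.eq_of_sortedLE hf.sortedLE_ofFn hg.sortedLE_ofFn)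

theorem Finset.sum_range_id_add_one (c : ℕ) :
    ∑ i ∈ range c, (i + 1) = c * (c + 1) / 2 := by
  have h := sum_range_succ' (fun i => i) c
  rw [sum_range_id, Nat.add_sub_cancel, add_zero] at h
  rw [← h, Nat.mul_comm]

namespace YoungDiagram

variable (μ : YoungDiagram)

theorem fst_lt_colLen_zero {c : ℕ × ℕ} (hc : c ∈ μ) : c.1 < μ.colLen 0 :=
  mem_iff_lt_colLen.1 (μ.up_left_mem le_rfl (Nat.zero_le c.2) hc)

theorem snd_lt_rowLen_zero {c : ℕ × ℕ} (hc : c ∈ μ) : c.2 < μ.rowLen 0 :=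
  mem_iff_lt_rowLen.1 (μ.up_left_mem (Nat.zero_le c.1) le_rfl hc)

theorem sum_cells_eq_sum_rows {M : Type*} [AddCommMonoid M] (f : ℕ × ℕ → M) :
    ∑ c ∈ μ.cells, f c = ∑ i ∈ range (μ.colLen 0), ∑ c ∈ μ.row i, f c :=
  (sum_fiberwise_of_maps_to (g := Prod.fst)
    (fun _ hc => mem_range.2 (μ.fst_lt_colLen_zero ((μ.mem_cells _).1 hc))) f).symm

theorem sum_cells_eq_sum_cols {M : Type*} [AddCommMonoid M] (f : ℕ × ℕ → M) :
    ∑ c ∈ μ.cells, f c = ∑ j ∈ range (μ.rowLen 0), ∑ c ∈ μ.col j, f c :=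
  (sum_fiberwise_of_maps_to (g := Prod.snd)
    (fun _ hc => mem_range.2 (μ.snd_lt_rowLen_zero ((μ.mem_cells _).1 hc))) f).symm

end YoungDiagram

theorem diagramWeight_eq_sum_rowLen (μ : YoungDiagram) :
    diagramWeight μ = ∑ i ∈ range (μ.colLen 0), (i + 1) * μ.rowLen i := by
  have by_cols : diagramWeight μ = ∑ c ∈ μ.cells, (c.1 + 1) := by
    simp [μ.sum_cells_eq_sum_cols, YoungDiagram.col_eq_prod,
      sum_range_id_add_one, diagramWeight]
  simp [by_cols, μ.sum_cells_eq_sum_rows, YoungDiagram.row_eq_prod, mul_comm]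

theorem ssytCount_le_prod_multichoose (μ : YoungDiagram) (n : ℕ) :
    ssytCount μ n ≤ ∏ i ∈ range (μ.colLen 0), n.multichoose (μ.rowLen i) := by
  classical
  let Tab := {T : SemistandardYoungTableau μ // ∀ c ∈ μ.cells, T.entry c.1 c.2 < n}
  let row (T : Tab) (i : ℕ) (j : Fin (μ.rowLen i)) : Fin n :=
    ⟨T.1 i j, T.2 _ ((μ.mem_cells _).2 (YoungDiagram.mem_iff_lt_rowLen.2 j.2))⟩
  have row_mono (T : Tab) (i : ℕ) : Monotone (row T i) := fun j₁ j₂ h =>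
    h.lt_or_eq.elim (fun h => T.1.row_weak h (YoungDiagram.mem_iff_lt_rowLen.2 j₂.2))
      (fun h => h ▸ le_rfl)
  let rows (T : Tab) (i : Fin (μ.colLen 0)) : Sym (Fin n) (μ.rowLen i) :=
    ⟨univ.val.map (row T i), by simp⟩
  have rows_injective : Function.Injective rows := by
    intro T T' h
    refine Subtype.ext (SemistandardYoungTableau.ext fun a b => ?_)
    by_cases hab : (a, b) ∈ μ
    · have h_row := (row_mono T a).eq_of_map_univ_val_eq (row_mono T' a)
        (congrArg Subtype.val (congrFun h ⟨a, μ.fst_lt_colLen_zero hab⟩))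
      exact congrArg Fin.val (congrFun h_row ⟨b, YoungDiagram.mem_iff_lt_rowLen.1 hab⟩)
    · rw [T.1.zeros hab, T'.1.zeros hab]
  calc ssytCount μ n ≤ Nat.card (∀ i : Fin (μ.colLen 0), Sym (Fin n) (μ.rowLen i)) :=
        Nat.card_le_card_of_injective rows rows_injective
    _ = ∏ i ∈ range (μ.colLen 0), n.multichoose (μ.rowLen i) := by
        simp [Nat.card_eq_fintype_card, Fintype.card_pi, Sym.card_sym_fin_eq_multichoose,
          Fin.prod_univ_eq_prod_range (fun i => n.multichoose (μ.rowLen i))]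

theorem Nat.multichoose_mul_pow_mul_one_sub_pow_le_one (n r : ℕ) {x : ℝ} (hx₀ : 0 ≤ x)
    (hx₁ : x ≤ 1) : (n.multichoose r : ℝ) * x ^ r * (1 - x) ^ n ≤ 1 := by
  rcases n with _ | m
  · rcases r with _ | r <;> simp [Nat.multichoose_zero_succ]
  rw [Nat.multichoose_eq, show m + 1 + r - 1 = m + r by omega]
  calc ((m + r).choose r : ℝ) * x ^ r * (1 - x) ^ (m + 1)
      = x ^ r * (1 - x) ^ (m + r - r) * ((m + r).choose r : ℝ) * (1 - x) := by
        rw [Nat.add_sub_cancel]; ring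
    _ ≤ (x + (1 - x)) ^ (m + r) * 1 := by
        rw [add_pow]
        gcongr
        · exact single_le_sum
            (f := fun j => x ^ j * (1 - x) ^ (m + r - j) * ((m + r).choose j : ℝ))
            (fun j _ => by positivity) (mem_range.2 (by omega))
        · linarith
    _ = 1 := by simp

theorem Nat.multichoose_le_exp (n r : ℕ) {t : ℝ} (ht : 0 < t) :
    (n.multichoose r : ℝ) ≤ exp (t * r + (n : ℝ) * -Real.log (1 - exp (-t))) := by
  have hx : 0 < 1 - exp (-t) := by simp [ht]
  have hexp : exp (t * r + (n : ℝ) * -Real.log (1 - exp (-t)))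
      = 1 / (exp (-t) ^ r * (1 - exp (-t)) ^ n) := by
    have hpow : (1 - exp (-t)) ^ n = exp (n * Real.log (1 - exp (-t))) := by
      rw [exp_nat_mul, exp_log hx]
    rw [hpow, ← exp_nat_mul, ← exp_add, one_div, ← exp_neg]
    ring_nf
  rw [hexp, le_div_iff₀ (by positivity), ← mul_assoc]
  exact n.multichoose_mul_pow_mul_one_sub_pow_le_one r (exp_pos _).le
    (exp_le_one_iff.2 (by linarith))

theorem sum_range_exp_neg_mul_succ_le (N : ℕ) {s : ℝ} (hs : 0 < s) :
    ∑ i ∈ range N, exp (-(s * (i + 1))) ≤ 1 / s := by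
  have hq : exp (-s) < 1 := exp_lt_one_iff.2 (by linarith)
  calc ∑ i ∈ range N, exp (-(s * (i + 1))) = ∑ i ∈ Ico 1 (N + 1), exp (-s) ^ i := by
        rw [sum_Ico_eq_sum_range, Nat.add_sub_cancel]
        refine sum_congr rfl fun i _ => ?_
        rw [← exp_nat_mul]
        push_cast
        ring_nf
    _ ≤ exp (-s) ^ 1 / (1 - exp (-s)) := geom_sum_Ico_le_of_lt_one (exp_pos _).le hq
    _ = 1 / (exp s - 1) := by
        have : 1 < exp s := one_lt_exp_iff.2 hs
        rw [exp_neg]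
        field_simp
    _ ≤ 1 / s := one_div_le_one_div_of_le hs (by linarith [add_one_le_exp s])

theorem sum_range_neg_log_one_sub_exp_le (N : ℕ) {t : ℝ} (ht : 0 < t) :
    ∑ i ∈ range N, -Real.log (1 - exp (-(t * (i + 1)))) ≤ π ^ 2 / 6 / t := by
  have hlog (i : ℕ) : HasSum (fun k : ℕ => exp (-(t * (i + 1))) ^ (k + 1) / (k + 1))
      (-Real.log (1 - exp (-(t * (i + 1))))) := by
    refine Real.hasSum_pow_div_log_of_abs_lt_one ?_
    rw [abs_of_pos (exp_pos _), exp_lt_one_iff]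
    simp only [neg_lt_zero]
    positivity
  have hzeta : HasSum (fun k : ℕ => 1 / ((k : ℝ) + 1) ^ 2 / t) (π ^ 2 / 6 / t) := by
    simpa using ((hasSum_nat_add_iff' 1).2 hasSum_zeta_two).div_const t
  refine hasSum_le (fun k => ?_) (hasSum_sum fun i _ => hlog i) hzeta
  have hk : 0 < t * (k + 1) := by positivity
  calc ∑ i ∈ range N, exp (-(t * (i + 1))) ^ (k + 1) / (k + 1)
      = (∑ i ∈ range N, exp (-(t * (k + 1) * (i + 1)))) / (k + 1) := by
        rw [sum_div]
        refine sum_congr rfl fun i _ => ?_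
        rw [← exp_nat_mul]
        push_cast
        ring_nf
    _ ≤ 1 / (t * (k + 1)) / (k + 1) := by
        gcongr
        exact sum_range_exp_neg_mul_succ_le N hk
    _ = 1 / ((k : ℝ) + 1) ^ 2 / t := by
        field_simp

theorem ssytCount_le_exp (μ : YoungDiagram) (n : ℕ) {t : ℝ} (ht : 0 < t) :
    (ssytCount μ n : ℝ) ≤ exp (t * diagramWeight μ + π ^ 2 / 6 * n / t) := by
  calc (ssytCount μ n : ℝ)
        ≤ ∏ i ∈ range (μ.colLen 0), (n.multichoose (μ.rowLen i) : ℝ) := by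
        exact_mod_cast ssytCount_le_prod_multichoose μ n
    _ ≤ ∏ i ∈ range (μ.colLen 0), exp (t * (i + 1) * μ.rowLen i
          + n * -Real.log (1 - exp (-(t * (i + 1))))) :=
        prod_le_prod (fun _ _ => by positivity)
          fun i _ => n.multichoose_le_exp (μ.rowLen i) (by positivity)
    _ = exp (t * diagramWeight μ
          + n * ∑ i ∈ range (μ.colLen 0), -Real.log (1 - exp (-(t * (i + 1))))) := by
        rw [← exp_sum, sum_add_distrib, diagramWeight_eq_sum_rowLen]
        push_cast
        rw [mul_sum, mul_sum]
        simp only [mul_assoc]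
    _ ≤ exp (t * diagramWeight μ + π ^ 2 / 6 * n / t) := by
        gcongr
        calc (n : ℝ) * _ ≤ n * (π ^ 2 / 6 / t) := by
              gcongr; exact sum_range_neg_log_one_sub_exp_le _ ht
          _ = π ^ 2 / 6 * n / t := by ring

/-- If `w(λ) < εn` then the number of semistandard tableaux of shape `λ` with letters
from `[n]` is at most `exp(C√ε·n)` for an absolute constant `C` and large `n`. -/
theorem stmt_8 :
    ∃ C : ℝ, 0 < C ∧ ∀ ε : ℝ, 0 < ε →
      ∃ N : ℕ, ∀ n : ℕ, N ≤ n → ∀ μ : YoungDiagram,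
        (diagramWeight μ : ℝ) < ε * n →
        (ssytCount μ n : ℝ) ≤ Real.exp (C * Real.sqrt ε * n) := by
  refine ⟨1 + π ^ 2 / 6, by positivity, fun ε hε => ⟨0, fun n _ μ hw => ?_⟩⟩
  have hsqrt : 0 < √ε := sqrt_pos.2 hε
  refine (ssytCount_le_exp μ n (inv_pos.2 hsqrt)).trans (exp_le_exp.2 ?_)
  have hweight : (√ε)⁻¹ * diagramWeight μ ≤ √ε * n := by
    calc (√ε)⁻¹ * diagramWeight μ ≤ (√ε)⁻¹ * (ε * n) := by gcongr
      _ = √ε * n := by rw [← mul_assoc, inv_mul_eq_div, div_sqrt]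
  calc (√ε)⁻¹ * diagramWeight μ + π ^ 2 / 6 * n / (√ε)⁻¹
      ≤ √ε * n + π ^ 2 / 6 * n * √ε := by rw [div_inv_eq_mul]; linarith
    _ = (1 + π ^ 2 / 6) * √ε * n := by ring
end

section
/- Let μ be a probability measure on a finite abelian group R, and define ν by ν(t) = γ (μ * μ⁻)(t) for t ≠ 0 and ν(0) = 1 − Σ_{s≠0} ν(s), where γ = 1/8 and μ⁻(t) = μ(−t). Then ν is a probability measure, its Fourier transform satisfies ν̂(χ) = 1 − γ + γ|μ̂(χ)|² for every character χ, in particular ν̂ is real and ν̂ > 1 − 2γ, and if μ has min-entropy α then ν has min-entropy at least γα. -/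
open scoped BigOperators

/-- The symmetrized lazy distribution `ν`: `ν(t) = (1/8)(μ * μ⁻)(t)` for `t ≠ 0` and
`ν(0) = 1 - Σ_{s ≠ 0} ν(s)`, where `(μ * μ⁻)(t) = Σ_s μ(s)μ(s - t)`. -/
noncomputable def lazyMeasure {R : Type*} [AddCommGroup R] [Fintype R] [DecidableEq R]
    (μ : R → ℝ) : R → ℝ := fun t =>
  if t = 0 then
    1 - ∑ s ∈ Finset.univ.filter (fun s : R => s ≠ 0),
      (1 / 8 : ℝ) * ∑ u, μ u * μ (u - s)
  else (1 / 8 : ℝ) * ∑ u, μ u * μ (u - t)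

/-!
For a probability measure `μ`, the autocorrelation `μ * μ⁻` is again a probability measure,
its Fourier transform is `|μ̂|²`, and it inherits every pointwise upper bound of `μ`.
Since `μ * μ⁻` has total mass one, the mass that `lazyMeasure μ` puts at `0` makes it the
mixture `ν = (7/8) δ₀ + (1/8) μ * μ⁻`, from which all claims follow by linearity.
-/

namespace LazyMeasure

variable {R : Type*} [AddCommGroup R] [Fintype R]

/-- `(μ * μ⁻)(t) = Σ_u μ(u) μ(u - t)`. -/
def autocorr (μ : R → ℝ) (t : R) : ℝ := ∑ u, μ u * μ (u - t)

theorem autocorr_nonneg {μ : R → ℝ} (hμ : ∀ t, 0 ≤ μ t) (t : R) : 0 ≤ autocorr μ t :=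
  Finset.sum_nonneg fun u _ => mul_nonneg (hμ u) (hμ _)

theorem autocorr_le {μ : R → ℝ} {b : ℝ} (hμ0 : ∀ t, 0 ≤ μ t) (hμ1 : ∑ t, μ t = 1)
    (hb : ∀ t, μ t ≤ b) (t : R) : autocorr μ t ≤ b :=
  calc autocorr μ t ≤ ∑ u, μ u * b :=
        Finset.sum_le_sum fun u _ => mul_le_mul_of_nonneg_left (hb _) (hμ0 u)
    _ = b := by rw [← Finset.sum_mul, hμ1, one_mul]

theorem sum_autocorr (μ : R → ℝ) : ∑ t, autocorr μ t = (∑ t, μ t) ^ 2 := by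
  have hshift : ∀ u : R, ∑ t, μ (u - t) = ∑ t, μ t := fun u =>
    Fintype.sum_equiv (Equiv.subLeft u) _ _ fun _ => rfl
  simp only [autocorr]
  rw [Finset.sum_comm]
  simp only [← Finset.mul_sum, hshift, ← Finset.sum_mul, sq]

theorem sum_autocorr_mul_addChar (μ : R → ℝ) (χ : AddChar R ℂ) :
    ∑ t, (autocorr μ t : ℂ) * χ t = (‖∑ t, (μ t : ℂ) * χ t‖ : ℂ) ^ 2 := by
  have hχ : ∀ u v : R, χ (u - v) = χ u * starRingEnd ℂ (χ v) := fun u v => by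
    rw [sub_eq_add_neg, AddChar.map_add_eq_mul, AddChar.map_neg_eq_conj]
  -- reindex the inner sum by `v = u - t`
  have hreindex : ∑ t, (autocorr μ t : ℂ) * χ t
      = ∑ u, ∑ v, (μ u : ℂ) * χ u * ((μ v : ℂ) * starRingEnd ℂ (χ v)) := by
    simp only [autocorr, Complex.ofReal_sum, Complex.ofReal_mul, Finset.sum_mul]
    rw [Finset.sum_comm]
    refine Finset.sum_congr rfl fun u _ => ?_
    refine (Fintype.sum_equiv (Equiv.subLeft u) _ _ fun v => ?_).symm
    rw [Equiv.subLeft_apply, sub_sub_cancel, hχ]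
    ring
  rw [hreindex, ← Finset.sum_mul_sum, ← Complex.mul_conj', map_sum]
  simp only [map_mul, Complex.conj_ofReal]

variable [DecidableEq R]

theorem lazyMeasure_eq {μ : R → ℝ} (hμ1 : ∑ t, μ t = 1) (t : R) :
    lazyMeasure μ t = (if t = 0 then 7 / 8 else 0) + autocorr μ t / 8 := by
  have hmass : ∑ s ∈ Finset.univ.filter (fun s : R => s ≠ 0), autocorr μ s
      = 1 - autocorr μ 0 := by
    rw [Finset.filter_ne', Finset.sum_erase_eq_sub (Finset.mem_univ 0), sum_autocorr, hμ1,
      one_pow]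
  unfold lazyMeasure
  split_ifs with ht
  · subst ht
    rw [← Finset.mul_sum]
    change 1 - 1 / 8 * ∑ s ∈ _, autocorr μ s = _
    rw [hmass]
    ring
  · change 1 / 8 * autocorr μ t = _
    ring

theorem sum_lazyMeasure_mul_addChar {μ : R → ℝ} (hμ1 : ∑ t, μ t = 1) (χ : AddChar R ℂ) :
    ∑ t, (lazyMeasure μ t : ℂ) * χ t
      = 1 - (1 / 8 : ℂ) + (1 / 8 : ℂ) * ‖∑ t, (μ t : ℂ) * χ t‖ ^ 2 := by
  simp only [lazyMeasure_eq hμ1, Complex.ofReal_add, Complex.ofReal_div, apply_ite,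
    Complex.ofReal_zero, add_mul, ite_mul, zero_mul, Finset.sum_add_distrib,
    Finset.sum_ite_eq', Finset.mem_univ, if_true, AddChar.map_zero_eq_one, div_mul_eq_mul_div,
    ← Finset.sum_div, sum_autocorr_mul_addChar]
  push_cast
  ring

end LazyMeasure

open LazyMeasure in
theorem stmt_13_general {R : Type*} [AddCommGroup R] [Fintype R] [DecidableEq R]
    (μ : R → ℝ) (hμ0 : ∀ t, 0 ≤ μ t) (hμ1 : ∑ t, μ t = 1)
    (α : ℝ) (hent : ∀ t, μ t ≤ 1 - α) :
    (∀ t, 0 ≤ lazyMeasure μ t) ∧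
    (∑ t, lazyMeasure μ t = 1) ∧
    (∀ χ : AddChar R ℂ,
      ∑ t, (lazyMeasure μ t : ℂ) * χ t
        = 1 - (1 / 8 : ℂ) + (1 / 8 : ℂ) * ‖∑ t, (μ t : ℂ) * χ t‖ ^ 2) ∧
    (∀ χ : AddChar R ℂ, (∑ t, (lazyMeasure μ t : ℂ) * χ t).im = 0) ∧
    (∀ χ : AddChar R ℂ, (1 - 2 * (1 / 8 : ℝ)) < (∑ t, (lazyMeasure μ t : ℂ) * χ t).re) ∧
    (∀ t, lazyMeasure μ t ≤ 1 - α / 8) := by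
  have hreal : ∀ χ : AddChar R ℂ, ∑ t, (lazyMeasure μ t : ℂ) * χ t
      = ((1 - 1 / 8 + 1 / 8 * ‖∑ t, (μ t : ℂ) * χ t‖ ^ 2 : ℝ) : ℂ) := fun χ => by
    rw [sum_lazyMeasure_mul_addChar hμ1]
    push_cast
    ring
  refine ⟨fun t => ?_, ?_, sum_lazyMeasure_mul_addChar hμ1, fun χ => ?_, fun χ => ?_,
    fun t => ?_⟩
  · rw [lazyMeasure_eq hμ1]
    have := autocorr_nonneg hμ0 t
    split_ifs <;> linarith
  · simp only [lazyMeasure_eq hμ1, Finset.sum_add_distrib, Finset.sum_ite_eq',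
      Finset.mem_univ, if_true, ← Finset.sum_div, sum_autocorr, hμ1]
    norm_num
  · rw [hreal, Complex.ofReal_im]
  · rw [hreal, Complex.ofReal_re]
    nlinarith [norm_nonneg (∑ t, (μ t : ℂ) * χ t)]
  · rw [lazyMeasure_eq hμ1]
    have := autocorr_le hμ0 hμ1 hent t
    have := autocorr_nonneg hμ0 t
    split_ifs <;> linarith

/-- `ν` is a probability measure with real Fourier transform
`ν̂ = 1 - γ + γ|μ̂|² > 1 - 2γ` (`γ = 1/8`), and `ν` has min-entropy at least `α/8` if `μ`
has min-entropy `α`. -/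
theorem stmt_13 {R : Type*} [AddCommGroup R] [Fintype R] [DecidableEq R]
    (μ : R → ℝ) (hμ0 : ∀ t, 0 ≤ μ t) (hμ1 : ∑ t, μ t = 1)
    (α : ℝ) (hα0 : 0 < α) (hα1 : α < 1) (hent : ∀ t, μ t ≤ 1 - α) :
    (∀ t, 0 ≤ lazyMeasure μ t) ∧
    (∑ t, lazyMeasure μ t = 1) ∧
    (∀ χ : AddChar R ℂ,
      ∑ t, (lazyMeasure μ t : ℂ) * χ t
        = 1 - (1 / 8 : ℂ) + (1 / 8 : ℂ) * ‖∑ t, (μ t : ℂ) * χ t‖ ^ 2) ∧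
    (∀ χ : AddChar R ℂ, (∑ t, (lazyMeasure μ t : ℂ) * χ t).im = 0) ∧
    (∀ χ : AddChar R ℂ, (1 - 2 * (1 / 8 : ℝ)) < (∑ t, (lazyMeasure μ t : ℂ) * χ t).re) ∧
    (∀ t, lazyMeasure μ t ≤ 1 - α / 8) :=
  stmt_13_general μ hμ0 hμ1 α hent
end

section
/- Let μ be a probability measure on a finite abelian group with ν̂(t) = 1 − γ + γ|μ̂(t)|², γ = 1/8. Then for all characters s, t: |μ̂(t) μ̂(s)| ≤ ν̂(t + s)². -/
/-!
Write `a = |μ̂(t)|`, `b = |μ̂(s)|`, `d = |μ̂(t + s)|`. Pointwise on the unit disk,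
`1 - Re(uv) ≤ 2(1 - Re u) + 2(1 - Re v)`; rotating `μ̂(t)` and `μ̂(s)` onto the positive real axis
and averaging against `μ` gives `1 - d ≤ 2(1 - a) + 2(1 - b)`, the quantitative form of
`Spec_{1-ε} + Spec_{1-ε} ⊆ Spec_{1-4ε}`. With `m = (a + b)/2` this says `d ≥ 4m - 3`, and then
`7/8 + d²/8 ≥ 2m² - 3m + 2 ≥ m` as soon as `m ≥ 3/4`, so `ab ≤ m² ≤ (7/8 + d²/8)²`.
-/

open Finset

lemma Complex.re_mul_self_add_im_mul_self_le_one {z : ℂ} (hz : ‖z‖ ≤ 1) :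
    z.re * z.re + z.im * z.im ≤ 1 := by
  rw [← Complex.normSq_apply, ← Complex.sq_norm]
  exact pow_le_one₀ (norm_nonneg z) hz

lemma Complex.one_sub_re_mul_le {u v : ℂ} (hu : ‖u‖ ≤ 1) (hv : ‖v‖ ≤ 1) :
    1 - (u * v).re ≤ 2 * (1 - u.re) + 2 * (1 - v.re) := by
  have := Complex.re_mul_self_add_im_mul_self_le_one hu
  have := Complex.re_mul_self_add_im_mul_self_le_one hv
  rw [Complex.mul_re]
  nlinarith [sq_nonneg (u.im - v.im), sq_nonneg (u.re + v.re - 2)]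

lemma Complex.exists_norm_eq_one_mul_eq_norm (z : ℂ) : ∃ c : ℂ, ‖c‖ = 1 ∧ c * z = ‖z‖ := by
  refine ⟨Complex.exp (↑(-z.arg) * Complex.I), Complex.norm_exp_ofReal_mul_I _, ?_⟩
  nth_rw 2 [← Complex.norm_mul_exp_arg_mul_I z]
  rw [mul_left_comm, ← Complex.exp_add, Complex.ofReal_neg, neg_mul, neg_add_cancel,
    Complex.exp_zero, mul_one]

section Average

variable {ι : Type*} [Fintype ι] {μ : ι → ℝ}

lemma one_sub_re_sum_ofReal_mul (hμ1 : ∑ x, μ x = 1) (f : ι → ℂ) :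
    1 - (∑ x, (μ x : ℂ) * f x).re = ∑ x, μ x * (1 - (f x).re) := by
  simp only [Complex.re_sum, Complex.re_ofReal_mul, mul_sub, mul_one, sum_sub_distrib, hμ1]

lemma one_sub_re_sum_ofReal_mul_mul_le (hμ0 : ∀ x, 0 ≤ μ x) (hμ1 : ∑ x, μ x = 1) {f g : ι → ℂ}
    (hf : ∀ x, ‖f x‖ ≤ 1) (hg : ∀ x, ‖g x‖ ≤ 1) :
    1 - (∑ x, (μ x : ℂ) * (f x * g x)).re
      ≤ 2 * (1 - (∑ x, (μ x : ℂ) * f x).re) + 2 * (1 - (∑ x, (μ x : ℂ) * g x).re) := by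
  simp only [one_sub_re_sum_ofReal_mul hμ1, mul_sum, ← sum_add_distrib]
  gcongr with x
  rw [mul_left_comm 2, mul_left_comm 2, ← mul_add]
  exact mul_le_mul_of_nonneg_left (Complex.one_sub_re_mul_le (hf x) (hg x)) (hμ0 x)

lemma one_sub_norm_sum_ofReal_mul_mul_le (hμ0 : ∀ x, 0 ≤ μ x) (hμ1 : ∑ x, μ x = 1) {f g : ι → ℂ}
    (hf : ∀ x, ‖f x‖ ≤ 1) (hg : ∀ x, ‖g x‖ ≤ 1) :
    1 - ‖∑ x, (μ x : ℂ) * (f x * g x)‖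
      ≤ 2 * (1 - ‖∑ x, (μ x : ℂ) * f x‖) + 2 * (1 - ‖∑ x, (μ x : ℂ) * g x‖) := by
  obtain ⟨c, hc, hcf⟩ := Complex.exists_norm_eq_one_mul_eq_norm (∑ x, (μ x : ℂ) * f x)
  obtain ⟨c', hc', hc'g⟩ := Complex.exists_norm_eq_one_mul_eq_norm (∑ x, (μ x : ℂ) * g x)
  have hcf' : ∑ x, (μ x : ℂ) * (c * f x) = ‖∑ x, (μ x : ℂ) * f x‖ := by
    simp only [mul_left_comm _ c, ← mul_sum, hcf]
  have hc'g' : ∑ x, (μ x : ℂ) * (c' * g x) = ‖∑ x, (μ x : ℂ) * g x‖ := by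
    simp only [mul_left_comm _ c', ← mul_sum, hc'g]
  have hprod : ∑ x, (μ x : ℂ) * (c * f x * (c' * g x))
      = c * c' * ∑ x, (μ x : ℂ) * (f x * g x) := by
    rw [mul_sum]
    exact sum_congr rfl fun x _ => by ring
  have hre : (c * c' * ∑ x, (μ x : ℂ) * (f x * g x)).re ≤ ‖∑ x, (μ x : ℂ) * (f x * g x)‖ :=
    (Complex.re_le_norm _).trans_eq (by rw [norm_mul, norm_mul, hc, hc', one_mul, one_mul])
  have key := one_sub_re_sum_ofReal_mul_mul_le hμ0 hμ1 (f := fun x => c * f x)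
    (g := fun x => c' * g x) (by simpa [hc] using hf) (by simpa [hc'] using hg)
  rw [hprod, hcf', hc'g', Complex.ofReal_re, Complex.ofReal_re] at key
  linarith

end Average

lemma mul_le_sq_of_one_sub_le {a b d : ℝ} (ha : 0 ≤ a) (hb : 0 ≤ b)
    (h : 1 - d ≤ 2 * (1 - a) + 2 * (1 - b)) :
    a * b ≤ (7 / 8 + d ^ 2 / 8) ^ 2 := by
  have hmean : (a + b) / 2 ≤ 7 / 8 + d ^ 2 / 8 := by
    rcases le_or_gt ((a + b) / 2) (3 / 4) with hm | hm
    · nlinarith [sq_nonneg d]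
    · have hd' : 2 * (a + b) - 3 ≤ d := by linarith
      nlinarith [mul_self_le_mul_self (by linarith) hd', sq_nonneg ((a + b) / 2 - 1)]
  calc a * b ≤ ((a + b) / 2) ^ 2 := by nlinarith [sq_nonneg (a - b)]
    _ ≤ (7 / 8 + d ^ 2 / 8) ^ 2 := pow_le_pow_left₀ (by positivity) hmean 2

/-- With `ν̂ = 7/8 + |μ̂|²/8`, one has `|μ̂(t)μ̂(s)| ≤ ν̂(t + s)²` for all characters
`s, t` (the sum `t + s` in the dual group being the pointwise product of characters). -/
theorem stmt_15 {R : Type*} [AddCommGroup R] [Fintype R]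
    (μ : R → ℝ) (hμ0 : ∀ x, 0 ≤ μ x) (hμ1 : ∑ x, μ x = 1)
    (t s : AddChar R ℂ) :
    ‖(∑ x, (μ x : ℂ) * t x) * (∑ x, (μ x : ℂ) * s x)‖
      ≤ ((7 / 8 : ℝ) + ‖∑ x, (μ x : ℂ) * (t * s) x‖ ^ 2 / 8) ^ 2 := by
  rw [norm_mul]
  refine mul_le_sq_of_one_sub_le (norm_nonneg _) (norm_nonneg _) ?_
  simpa only [AddChar.mul_apply] using
    one_sub_norm_sum_ofReal_mul_mul_le hμ0 hμ1 (f := t) (g := s) (fun x => (t.norm_apply x).le)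
      (fun x => (s.norm_apply x).le)
end

section
/- Let R be a finite module over a commutative ring (e.g. ℤ/Nℤ), W^⊥ a fixed finite submodule isomorphism class in (R̂)^n, and ζ ∈ (R̂)^n an element of order T. Then the number of submodules N ≤ R^n with N^⊥ ≅ W^⊥ and ζ ∈ N^⊥ equals #{N : N^⊥ ≅ W^⊥} · #{ξ ∈ W^⊥ : ord(ξ) = T} / #{ξ ∈ (R̂)^n : ord(ξ) = T}, and in particular is at most (|W^⊥|^n / (|Aut W^⊥| · #{ξ ∈ (R̂)^n : ord(ξ)=T})) · #{ξ ∈ W^⊥ : ord(ξ) = T}. -/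
/-- The perpendicular submodule `N^⊥` of `N ≤ (ℤ/mℤ)^n` under the standard bilinear
pairing (identifying the dual group of `ℤ/mℤ` with `ℤ/mℤ`). -/
def zmodPerp {m n : ℕ} (N : Submodule (ZMod m) (Fin n → ZMod m)) :
    Submodule (ZMod m) (Fin n → ZMod m) where
  carrier := {ψ | ∀ v ∈ N, ∑ ℓ, ψ ℓ * v ℓ = 0}
  add_mem' := by
    intro a b ha hb v hv
    simp only [Set.mem_setOf_eq, Pi.add_apply, add_mul, Finset.sum_add_distrib] at *
    rw [ha v hv, hb v hv, add_zero]
  zero_mem' := by intro v hv; simp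
  smul_mem' := by
    intro c ψ h v hv
    simp only [Set.mem_setOf_eq, Pi.smul_apply, smul_eq_mul, mul_assoc,
      ← Finset.mul_sum] at *
    rw [h v hv, mul_zero]

/-!
Perpendicularity is an involution on submodules of `V = (ℤ/mℤ)^n`: `N ≤ N^⊥⊥`, and
`|N^⊥⊥| ≤ |V/N^⊥| ≤ |N|` because `N^⊥ ≅ (V/N)^*`, `V/N^⊥` embeds in `N^*`, and a finite
`ℤ/mℤ`-module has at most as many `ℤ/mℤ`-valued functionals as elements (they embed into its
complex characters). Hence both counts may be taken over the submodules `P = N^⊥ ≅ W^⊥`.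

Counting the incidences `ξ ∈ P` with `ord ξ = T` by `P` gives `#{P} · #{ξ ∈ W^⊥ : ord ξ = T}`;
counting them by `ξ` gives `#{ξ : ord ξ = T} · #{P ∋ ζ}`, since the automorphisms of `V` act
transitively on the vectors of a given order: Euclid's algorithm on pairs of coordinates moves
a vector to `u·d·e₀` with `u` a unit and `d ∣ m`, and then `d = m / ord`.

For the bound, a submodule `P ≅ W^⊥` together with an automorphism of `W^⊥` gives an injective
linear map `W^⊥ → V` with image `P`, and there are at most `|(W^⊥)^*|^n ≤ |W^⊥|^n` linear maps.
-/

open Module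

instance LinearMap.finite_of_finite {R M N : Type*} [Semiring R] [AddCommMonoid M] [Module R M]
    [AddCommMonoid N] [Module R N] [Finite M] [Finite N] : Finite (M →ₗ[R] N) :=
  FunLike.finite _

theorem ZMod.card_dual_le {m : ℕ} [NeZero m] (M : Type*) [AddCommGroup M] [Module (ZMod m) M]
    [Finite M] : Nat.card (Dual (ZMod m) M) ≤ Nat.card M := by
  have : Fintype M := Fintype.ofFinite M
  calc Nat.card (Dual (ZMod m) M) ≤ Nat.card (AddChar M ℂ) :=
        Nat.card_le_card_of_injective
          (fun f => ZMod.stdAddChar.compAddMonoidHom f.toAddMonoidHom)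
          ((AddChar.compAddMonoidHom_injective_right _ ZMod.injective_stdAddChar).comp
            LinearMap.toAddMonoidHom_injective)
    _ = Nat.card M := by simp only [Nat.card_eq_fintype_card, AddChar.card_eq]

section Perp

variable {m n : ℕ}

theorem mem_zmodPerp_iff {N : Submodule (ZMod m) (Fin n → ZMod m)} {ψ : Fin n → ZMod m} :
    ψ ∈ zmodPerp N ↔ dotProductEquiv (ZMod m) (Fin n) ψ ∈ N.dualAnnihilator := by
  rw [Submodule.mem_dualAnnihilator]
  rfl

theorem le_zmodPerp_zmodPerp (N : Submodule (ZMod m) (Fin n → ZMod m)) :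
    N ≤ zmodPerp (zmodPerp N) := fun v hv ψ hψ => by
  simpa only [mul_comm] using hψ v hv

theorem ker_dualRestrict_comp_dotProductEquiv (N : Submodule (ZMod m) (Fin n → ZMod m)) :
    LinearMap.ker (N.dualRestrict ∘ₗ (dotProductEquiv (ZMod m) (Fin n)).toLinearMap)
      = zmodPerp N := by
  ext ψ
  rw [LinearMap.ker_comp, Submodule.dualRestrict_ker_eq_dualAnnihilator]
  exact mem_zmodPerp_iff.symm

variable [NeZero m]

theorem card_zmodPerp_le (N : Submodule (ZMod m) (Fin n → ZMod m)) :
    Nat.card (zmodPerp N) ≤ Nat.card ((Fin n → ZMod m) ⧸ N) :=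
  calc Nat.card (zmodPerp N) = Nat.card N.dualAnnihilator :=
        Nat.card_congr <| (dotProductEquiv (ZMod m) (Fin n)).toEquiv.subtypeEquiv
          fun _ => mem_zmodPerp_iff
    _ = Nat.card (Dual (ZMod m) ((Fin n → ZMod m) ⧸ N)) :=
        Nat.card_congr (Submodule.dualQuotEquivDualAnnihilator N).toEquiv.symm
    _ ≤ _ := ZMod.card_dual_le _

theorem card_quotient_zmodPerp_le (N : Submodule (ZMod m) (Fin n → ZMod m)) :
    Nat.card ((Fin n → ZMod m) ⧸ zmodPerp N) ≤ Nat.card N := by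
  set f := N.dualRestrict ∘ₗ (dotProductEquiv (ZMod m) (Fin n)).toLinearMap
  calc Nat.card ((Fin n → ZMod m) ⧸ zmodPerp N) = Nat.card (LinearMap.range f) :=
        Nat.card_congr ((Submodule.quotEquivOfEq _ _
          (ker_dualRestrict_comp_dotProductEquiv N).symm).trans f.quotKerEquivRange).toEquiv
    _ ≤ Nat.card (Dual (ZMod m) N) := Nat.card_le_card_of_injective _ Subtype.val_injective
    _ ≤ Nat.card N := ZMod.card_dual_le _

theorem zmodPerp_zmodPerp (N : Submodule (ZMod m) (Fin n → ZMod m)) :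
    zmodPerp (zmodPerp N) = N := by
  refine (Submodule.toAddSubgroup_injective ?_).symm
  exact AddSubgroup.eq_of_le_of_card_ge (le_zmodPerp_zmodPerp N)
    ((card_zmodPerp_le _).trans (card_quotient_zmodPerp_le N))

theorem zmodPerp_involutive : Function.Involutive (zmodPerp (m := m) (n := n)) :=
  zmodPerp_zmodPerp

end Perp

section Counting

variable {R V V' Q : Type*} [Semiring R] [AddCommMonoid V] [Module R V] [AddCommMonoid V']
  [Module R V'] [AddCommMonoid Q] [Module R Q]

def Submodule.addOrderOfEquiv {P : Submodule R V} (e : P ≃ₗ[R] Q) (T : ℕ) :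
    {ξ : V // ξ ∈ P ∧ addOrderOf ξ = T} ≃ {x : Q // addOrderOf x = T} :=
  (Equiv.subtypeSubtypeEquivSubtypeInter _ _).symm.trans <|
    e.toEquiv.subtypeEquiv fun x => by
      have hx : addOrderOf (e x) = addOrderOf x := e.toAddEquiv.addOrderOf_eq x
      rw [LinearEquiv.coe_toEquiv, hx, ← addOrderOf_addSubmonoid (H := P.toAddSubmonoid)]

def LinearEquiv.submoduleMemEquiv (e : V ≃ₗ[R] V') {x : V} {y : V'} (h : e x = y) :
    {P : Submodule R V // Nonempty (P ≃ₗ[R] Q) ∧ x ∈ P}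
      ≃ {P : Submodule R V' // Nonempty (P ≃ₗ[R] Q) ∧ y ∈ P} :=
  (Submodule.orderIsoMapComap e).toEquiv.subtypeEquiv fun P => by
    refine and_congr ⟨fun ⟨f⟩ => ⟨(e.submoduleMap P).symm.trans f⟩,
      fun ⟨f⟩ => ⟨(e.submoduleMap P).trans f⟩⟩ ?_
    change x ∈ P ↔ y ∈ P.map (e : V →ₗ[R] V')
    rw [← h, Submodule.mem_map_equiv, LinearEquiv.symm_apply_apply]

theorem card_submodule_mem_mul_card_addOrderOf (ζ : V)
    (htrans : ∀ ξ : V, addOrderOf ξ = addOrderOf ζ → ∃ e : V ≃ₗ[R] V, e ζ = ξ) :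
    Nat.card {P : Submodule R V // Nonempty (P ≃ₗ[R] Q) ∧ ζ ∈ P}
        * Nat.card {ξ : V // addOrderOf ξ = addOrderOf ζ}
      = Nat.card {P : Submodule R V // Nonempty (P ≃ₗ[R] Q)}
        * Nat.card {x : Q // addOrderOf x = addOrderOf ζ} := by
  choose e he using fun ξ : {ξ : V // addOrderOf ξ = addOrderOf ζ} => htrans ξ.1 ξ.2
  let incidence : (Σ P : {P : Submodule R V // Nonempty (P ≃ₗ[R] Q)},
        {ξ : V // ξ ∈ P.1 ∧ addOrderOf ξ = addOrderOf ζ})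
      ≃ Σ ξ : {ξ : V // addOrderOf ξ = addOrderOf ζ},
        {P : Submodule R V // Nonempty (P ≃ₗ[R] Q) ∧ ξ.1 ∈ P} :=
    { toFun := fun ⟨⟨P, hP⟩, ⟨ξ, hξP, hξ⟩⟩ => ⟨⟨ξ, hξ⟩, ⟨P, hP, hξP⟩⟩
      invFun := fun ⟨⟨ξ, hξ⟩, ⟨P, hP, hξP⟩⟩ => ⟨⟨P, hP⟩, ⟨ξ, hξP, hξ⟩⟩
      left_inv := fun ⟨⟨_, _⟩, ⟨_, _, _⟩⟩ => rfl
      right_inv := fun ⟨⟨_, _⟩, ⟨_, _, _⟩⟩ => rfl }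
  have hcount := Nat.card_congr <|
    ((Equiv.sigmaEquivProdOfEquiv fun P => Submodule.addOrderOfEquiv P.2.some _).symm.trans
      incidence).trans <|
    Equiv.sigmaEquivProdOfEquiv fun ξ =>
      (e ξ).symm.submoduleMemEquiv ((e ξ).symm_apply_eq.mpr (he ξ).symm)
  rw [Nat.card_prod, Nat.card_prod] at hcount
  rw [hcount, mul_comm]

theorem card_submodule_equiv_mul_card_linearEquiv_le [Finite (Q →ₗ[R] V)] :
    Nat.card {P : Submodule R V // Nonempty (P ≃ₗ[R] Q)} * Nat.card (Q ≃ₗ[R] Q)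
      ≤ Nat.card (Q →ₗ[R] V) := by
  rw [← Nat.card_prod]
  refine Nat.card_le_card_of_injective
    (fun Pα => Pα.1.1.subtype ∘ₗ (Pα.2.trans Pα.1.2.some.symm).toLinearMap) ?_
  have hrange (P : Submodule R V) (f : Q ≃ₗ[R] P) :
      LinearMap.range (P.subtype ∘ₗ f.toLinearMap) = P := by
    rw [LinearMap.range_comp, LinearEquiv.range, Submodule.map_top, Submodule.range_subtype]
  rintro ⟨⟨P, hP⟩, α⟩ ⟨⟨P', hP'⟩, α'⟩ h
  obtain rfl : P = P' := by simpa only [hrange] using congrArg LinearMap.range h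
  refine Prod.ext rfl (LinearEquiv.ext fun x => ?_)
  simpa using LinearMap.congr_fun h x

end Counting

theorem LinearMap.card_pi {R Q V : Type*} [Semiring R] [AddCommMonoid V] [Module R V]
    [AddCommMonoid Q] [Module R Q] (ι : Type*) [Finite ι] :
    Nat.card (Q →ₗ[R] (ι → V)) = Nat.card (Q →ₗ[R] V) ^ Nat.card ι :=
  (Nat.card_congr
    { toFun := fun f i => LinearMap.proj i ∘ₗ f
      invFun := LinearMap.pi
      left_inv := fun _ => rfl
      right_inv := fun _ => rfl }).trans Nat.card_fun

theorem addOrderOf_piSingle {ι : Type*} [DecidableEq ι] {M : ι → Type*} [∀ i, AddMonoid (M i)]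
    (i : ι) (x : M i) : addOrderOf (Pi.single i x) = addOrderOf x :=
  addOrderOf_injective (AddMonoidHom.single M i) (Pi.single_injective i) x

section Transitivity

variable {R ι : Type*} [CommRing R] [DecidableEq ι]

-- The matrix `!![u, v; -b, a]` of determinant `u * a + v * b = 1` acting on coordinates `i, j`.
def LinearEquiv.ofCoprimePair {i j : ι} (hij : i ≠ j) {a b u v : R} (h : u * a + v * b = 1) :
    (ι → R) ≃ₗ[R] (ι → R) where
  toFun w := Function.update (Function.update w i (u * w i + v * w j)) j (a * w j - b * w i)
  invFun w := Function.update (Function.update w i (a * w i - v * w j)) j (b * w i + u * w j)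
  map_add' w w' := by
    ext k
    simp only [Function.update_apply, Pi.add_apply]
    split_ifs <;> ring
  map_smul' c w := by
    ext k
    simp only [Function.update_apply, Pi.smul_apply, smul_eq_mul, RingHom.id_apply]
    split_ifs <;> ring
  left_inv w := by
    ext k
    simp only [Function.update_apply, hij, if_false]
    split_ifs <;> subst_vars <;> first | rfl | linear_combination w k * h
  right_inv w := by
    ext k
    simp only [Function.update_apply, hij, if_false]
    split_ifs <;> subst_vars <;> first | rfl | linear_combination w k * h

theorem exists_linearEquiv_apply_eq_update {i j : ι} (hij : i ≠ j) {ξ : ι → R} {a b g : R}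
    (hab : IsCoprime a b) (hi : ξ i = a * g) (hj : ξ j = b * g) :
    ∃ e : (ι → R) ≃ₗ[R] (ι → R), e ξ = Function.update (Function.update ξ i g) j 0 := by
  obtain ⟨u, v, h⟩ := hab
  refine ⟨LinearEquiv.ofCoprimePair hij h, ?_⟩
  ext k
  simp only [LinearEquiv.ofCoprimePair, LinearEquiv.coe_mk, LinearMap.coe_mk, AddHom.coe_mk,
    Function.update_apply, hi, hj]
  split_ifs <;> first | rfl | linear_combination g * h | ring

end Transitivity

namespace ZMod

variable {m : ℕ} [NeZero m] {ι : Type*}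

theorem exists_isCoprime_mul_eq (a b : ZMod m) :
    ∃ a' b' g : ZMod m, IsCoprime a' b' ∧ a = a' * g ∧ b = b' * g := by
  obtain ⟨a', b', hcop, ha, hb⟩ := Nat.exists_coprime a.val b.val
  generalize a.val.gcd b.val = g at ha hb
  refine ⟨a', b', g, ?_, ?_, ?_⟩
  · simpa using hcop.isCoprime.map (Int.castRingHom (ZMod m))
  · rw [← natCast_zmod_val a, ha, Nat.cast_mul]
  · rw [← natCast_zmod_val b, hb, Nat.cast_mul]

theorem exists_linearEquiv_apply_eq_single [Fintype ι] [DecidableEq ι] (i₀ : ι)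
    (ξ : ι → ZMod m) :
    ∃ (e : (ι → ZMod m) ≃ₗ[ZMod m] (ι → ZMod m)) (c : ZMod m), e ξ = Pi.single i₀ c := by
  suffices key : ∀ (s : Finset ι) (ξ : ι → ZMod m), (∀ k ∉ s, k ≠ i₀ → ξ k = 0) →
      ∃ (e : (ι → ZMod m) ≃ₗ[ZMod m] (ι → ZMod m)) (c : ZMod m), e ξ = Pi.single i₀ c from
    key Finset.univ ξ fun k hk => absurd (Finset.mem_univ k) hk
  intro s
  induction s using Finset.induction_on with
  | empty =>
    intro ξ hξ
    refine ⟨LinearEquiv.refl _ _, ξ i₀, funext fun k => ?_⟩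
    rcases eq_or_ne k i₀ with rfl | hk
    · simp
    · simp [hk, hξ k (Finset.notMem_empty k) hk]
  | insert j s hjs ih =>
    intro ξ hξ
    rcases eq_or_ne j i₀ with rfl | hj
    · exact ih ξ fun k hk hki => hξ k (by simp [hk, hki]) hki
    obtain ⟨a, b, g, hab, ha, hb⟩ := exists_isCoprime_mul_eq (ξ i₀) (ξ j)
    obtain ⟨e₁, he₁⟩ := exists_linearEquiv_apply_eq_update hj.symm hab ha hb
    obtain ⟨e₂, c, he₂⟩ := ih (e₁ ξ) fun k hk hki => by
      rcases eq_or_ne k j with rfl | hkj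
      · simp [he₁]
      · simp [he₁, hkj, hki, hξ k (by simp [hk, hkj]) hki]
    exact ⟨e₁.trans e₂, c, he₂⟩

theorem exists_linearEquiv_apply_eq_single_div_addOrderOf [Fintype ι] [DecidableEq ι] (i₀ : ι)
    (ξ : ι → ZMod m) :
    ∃ e : (ι → ZMod m) ≃ₗ[ZMod m] (ι → ZMod m),
      e ξ = Pi.single i₀ ((m / addOrderOf ξ : ℕ) : ZMod m) := by
  obtain ⟨e, c, hc⟩ := exists_linearEquiv_apply_eq_single i₀ ξ
  obtain ⟨d, hdm, u, hu, rfl⟩ := eq_unit_mul_divisor c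
  set e' := e.trans (LinearEquiv.smulOfUnit hu.unit⁻¹)
  have he' : e' ξ = Pi.single i₀ (d : ZMod m) := by
    change hu.unit⁻¹ • e ξ = _
    rw [hc, Units.smul_def, ← Pi.single_smul, smul_eq_mul, ← mul_assoc, hu.val_inv_mul, one_mul]
  have hord : addOrderOf ξ = m / d := by
    have he'_ord : addOrderOf (e' ξ) = addOrderOf ξ := e'.toAddEquiv.addOrderOf_eq ξ
    rw [← he'_ord, he', addOrderOf_piSingle, addOrderOf_coe _ (NeZero.ne m), Nat.gcd_eq_right hdm]
  exact ⟨e', by rw [he', hord, Nat.div_div_self hdm (NeZero.ne m)]⟩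

theorem exists_linearEquiv_apply_eq_of_addOrderOf_eq [Finite ι] {ξ η : ι → ZMod m}
    (h : addOrderOf ξ = addOrderOf η) :
    ∃ e : (ι → ZMod m) ≃ₗ[ZMod m] (ι → ZMod m), e ξ = η := by
  cases isEmpty_or_nonempty ι with
  | inl _ => exact ⟨LinearEquiv.refl _ _, Subsingleton.elim _ _⟩
  | inr hι =>
    classical
    have := Fintype.ofFinite ι
    obtain ⟨e₁, he₁⟩ := exists_linearEquiv_apply_eq_single_div_addOrderOf hι.some ξ
    obtain ⟨e₂, he₂⟩ := exists_linearEquiv_apply_eq_single_div_addOrderOf hι.some η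
    exact ⟨e₁.trans e₂.symm, by rw [LinearEquiv.trans_apply, he₁, h, ← he₂, e₂.symm_apply_apply]⟩

end ZMod

/-- Counting submodules `N ≤ (ℤ/mℤ)^n` with `N^⊥ ≅ W^⊥` containing a fixed dual vector
`ζ` of order `T`: the count equals
`#{N : N^⊥ ≅ W^⊥} · #{ξ ∈ W^⊥ : ord ξ = T} / #{ξ : ord ξ = T}`, and is at most
`(|W^⊥|^n / (|Aut W^⊥| · #{ξ : ord ξ = T})) · #{ξ ∈ W^⊥ : ord ξ = T}`
(both statements in multiplied-out form). -/
theorem stmt_17 (m n T : ℕ) [NeZero m]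
    (W : Submodule (ZMod m) (Fin n → ZMod m))
    (ζ : Fin n → ZMod m) (hζ : addOrderOf ζ = T) :
    (Nat.card {N : Submodule (ZMod m) (Fin n → ZMod m) //
          Nonempty (zmodPerp N ≃ₗ[ZMod m] zmodPerp W) ∧ ζ ∈ zmodPerp N}
        * Nat.card {ξ : Fin n → ZMod m // addOrderOf ξ = T}
      = Nat.card {N : Submodule (ZMod m) (Fin n → ZMod m) //
            Nonempty (zmodPerp N ≃ₗ[ZMod m] zmodPerp W)}
          * Nat.card {ξ : Fin n → ZMod m // ξ ∈ zmodPerp W ∧ addOrderOf ξ = T}) ∧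
    ((Nat.card {N : Submodule (ZMod m) (Fin n → ZMod m) //
          Nonempty (zmodPerp N ≃ₗ[ZMod m] zmodPerp W) ∧ ζ ∈ zmodPerp N} : ℝ)
        * (Nat.card ((zmodPerp W) ≃ₗ[ZMod m] (zmodPerp W)) : ℝ)
        * (Nat.card {ξ : Fin n → ZMod m // addOrderOf ξ = T} : ℝ)
      ≤ (Nat.card (zmodPerp W) : ℝ) ^ n
          * (Nat.card {ξ : Fin n → ZMod m // ξ ∈ zmodPerp W ∧ addOrderOf ξ = T} : ℝ)) := by
  subst hζ
  have card_perp (p : Submodule (ZMod m) (Fin n → ZMod m) → Prop) :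
      Nat.card {N // p (zmodPerp N)} = Nat.card {P // p P} :=
    Nat.card_congr ((zmodPerp_involutive.toPerm _).subtypeEquiv fun _ => Iff.rfl)
  have card_perp_W : Nat.card {ξ // ξ ∈ zmodPerp W ∧ addOrderOf ξ = addOrderOf ζ}
      = Nat.card {x : zmodPerp W // addOrderOf x = addOrderOf ζ} :=
    Nat.card_congr (Submodule.addOrderOfEquiv (LinearEquiv.refl _ _) _)
  have hcount := card_submodule_mem_mul_card_addOrderOf (Q := zmodPerp W) ζ
    fun _ hξ => ZMod.exists_linearEquiv_apply_eq_of_addOrderOf_eq hξ.symm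
  have hhom : Nat.card (zmodPerp W →ₗ[ZMod m] (Fin n → ZMod m)) ≤ Nat.card (zmodPerp W) ^ n := by
    rw [LinearMap.card_pi, Nat.card_fin]
    exact Nat.pow_le_pow_left (ZMod.card_dual_le _) n
  rw [card_perp (fun P => Nonempty (P ≃ₗ[ZMod m] zmodPerp W) ∧ ζ ∈ P),
    card_perp (fun P => Nonempty (P ≃ₗ[ZMod m] zmodPerp W)), card_perp_W]
  refine ⟨hcount, ?_⟩
  norm_cast
  rw [mul_right_comm, hcount, mul_right_comm]
  exact Nat.mul_le_mul_right _ ((card_submodule_equiv_mul_card_linearEquiv_le).trans hhom)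
end
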